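/- arXiv:1907.07026 — 2 statements merged into one kernel-verified Lean document; each statement's English description precedes it below -/
import Mathlib

section
/- Let P ∈ F_p[T] be a monic self-reciprocal polynomial of degree n, and suppose Q is a monic self-reciprocal irreducible factor of P of odd multiplicity, such that Q is the unique self-reciprocal monic irreducible factor of P with odd multiplicity. Then the number of monic polynomials R ∈ F_p[T] with P = R · Q · R° (where R° is the monic normalization of the reciprocal of R) equals the product over equivalence classes [S] of non-self-reciprocal monic irreducible factors S of P (where S ∼ S°) of (1 + m(S)). -/
open Polynomial

namespace Stmt10Aux

variable {K : Type*} [Field K]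

noncomputable def rop (R : K[X]) : K[X] := C (R.coeff 0)⁻¹ * R.reverse

lemma ntd_zero {R : K[X]} (h0 : R.coeff 0 ≠ 0) : R.natTrailingDegree = 0 :=
  natTrailingDegree_eq_zero.mpr (Or.inr h0)

lemma trailingCoeff_eq' {R : K[X]} (h0 : R.coeff 0 ≠ 0) : R.trailingCoeff = R.coeff 0 := by
  rw [trailingCoeff, ntd_zero h0]

lemma rop_monic {R : K[X]} (h0 : R.coeff 0 ≠ 0) : (rop R).Monic := by
  unfold rop Monic
  rw [leadingCoeff_mul, leadingCoeff_C, reverse_leadingCoeff, trailingCoeff_eq' h0,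
    inv_mul_cancel₀ h0]

lemma rop_natDegree {R : K[X]} (h0 : R.coeff 0 ≠ 0) : (rop R).natDegree = R.natDegree := by
  unfold rop
  rw [natDegree_C_mul (inv_ne_zero h0), reverse_natDegree, ntd_zero h0, Nat.sub_zero]

lemma rop_coeff_zero {R : K[X]} (hR : R.Monic) : (rop R).coeff 0 = (R.coeff 0)⁻¹ := by
  unfold rop
  rw [coeff_C_mul, coeff_zero_reverse, hR.leadingCoeff, mul_one]

lemma rop_coeff_zero_ne {R : K[X]} (hR : R.Monic) (h0 : R.coeff 0 ≠ 0) :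
    (rop R).coeff 0 ≠ 0 := by
  rw [rop_coeff_zero hR]; exact inv_ne_zero h0

lemma rop_mul {A B : K[X]} (hA : A.coeff 0 ≠ 0) (hB : B.coeff 0 ≠ 0) :
    rop (A * B) = rop A * rop B := by
  unfold rop
  rw [reverse_mul_of_domain, mul_coeff_zero, mul_inv, C_mul]
  ring

lemma reverse_reverse' {R : K[X]} (h0 : R.coeff 0 ≠ 0) : R.reverse.reverse = R := by
  ext n
  rw [coeff_reverse, reverse_natDegree, ntd_zero h0, Nat.sub_zero, coeff_reverse, revAt_invol]

lemma coeff_zero_pow (S : K[X]) (n : ℕ) : (S ^ n).coeff 0 = S.coeff 0 ^ n := by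
  induction n with
  | zero => simp
  | succ m ihm => rw [pow_succ, mul_coeff_zero, ihm, pow_succ]

lemma rop_rop {R : K[X]} (hR : R.Monic) (h0 : R.coeff 0 ≠ 0) : rop (rop R) = R := by
  have h1 : (rop R).coeff 0 = (R.coeff 0)⁻¹ := rop_coeff_zero hR
  rw [show rop (rop R) = C ((rop R).coeff 0)⁻¹ * (rop R).reverse from rfl, h1,
    show rop R = C (R.coeff 0)⁻¹ * R.reverse from rfl,
    reverse_mul_of_domain, reverse_C, reverse_reverse' h0, inv_inv,
    ← mul_assoc, ← C_mul, mul_inv_cancel₀ h0, C_1, one_mul]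

lemma rop_one : rop (1 : K[X]) = 1 := by
  have h : (1 : K[X]).reverse = 1 := by rw [← C_1, reverse_C]
  unfold rop
  rw [h]
  simp

lemma rop_irreducible {S : K[X]} (hS : S.Monic) (h0 : S.coeff 0 ≠ 0)
    (hirr : Irreducible S) : Irreducible (rop S) := by
  constructor
  · intro hu
    have := natDegree_eq_zero_of_isUnit hu
    rw [rop_natDegree h0] at this
    exact absurd this hirr.natDegree_pos.ne'
  · intro a b hab
    have ha0 : a.coeff 0 ≠ 0 := by
      intro h
      apply rop_coeff_zero_ne hS h0
      rw [hab, mul_coeff_zero, h, zero_mul]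
    have hb0 : b.coeff 0 ≠ 0 := by
      intro h
      apply rop_coeff_zero_ne hS h0
      rw [hab, mul_coeff_zero, h, mul_zero]
    have hS' : S = rop a * rop b := by
      rw [← rop_mul ha0 hb0, ← hab, rop_rop hS h0]
    rcases hirr.isUnit_or_isUnit hS' with h | h
    · left
      have := natDegree_eq_zero_of_isUnit h
      rw [rop_natDegree ha0] at this
      rw [eq_C_of_natDegree_eq_zero this]
      exact isUnit_C.mpr (isUnit_iff_ne_zero.mpr ha0)
    · right
      have := natDegree_eq_zero_of_isUnit h
      rw [rop_natDegree hb0] at this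
      rw [eq_C_of_natDegree_eq_zero this]
      exact isUnit_C.mpr (isUnit_iff_ne_zero.mpr hb0)

lemma coeff_zero_prod_ne {s : Multiset K[X]} (h : ∀ x ∈ s, x.coeff 0 ≠ 0) :
    s.prod.coeff 0 ≠ 0 := by
  induction s using Multiset.induction with
  | empty => simp
  | cons a t ih =>
    rw [Multiset.prod_cons, mul_coeff_zero]
    exact mul_ne_zero (h a (Multiset.mem_cons_self a t))
      (ih fun x hx => h x (Multiset.mem_cons_of_mem hx))

lemma rop_prod {s : Multiset K[X]} (h : ∀ x ∈ s, x.coeff 0 ≠ 0) :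
    rop s.prod = (s.map rop).prod := by
  induction s using Multiset.induction with
  | empty => simpa using rop_one
  | cons a t ih =>
    rw [Multiset.prod_cons, Multiset.map_cons, Multiset.prod_cons,
      rop_mul (h a (Multiset.mem_cons_self a t))
        (coeff_zero_prod_ne fun x hx => h x (Multiset.mem_cons_of_mem hx)),
      ih fun x hx => h x (Multiset.mem_cons_of_mem hx)]

lemma rop_pow {S : K[X]} (h0 : S.coeff 0 ≠ 0) (k : ℕ) : rop (S ^ k) = rop S ^ k := by
  induction k with
  | zero => simpa using rop_one
  | succ n ih =>
    have hp : (S ^ n).coeff 0 ≠ 0 := by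
      rw [coeff_zero_pow]; exact pow_ne_zero _ h0
    rw [pow_succ, rop_mul hp h0, ih, pow_succ]

end Stmt10Aux

open Polynomial Stmt10Aux UniqueFactorizationMonoid in
theorem stmt_10 (p : ℕ) [Fact p.Prime]
    (P Q : Polynomial (ZMod p)) (n : ℕ) (hdeg : P.natDegree = n)
    (m : Polynomial (ZMod p) → ℕ)
    (hm : ∀ S : Polynomial (ZMod p), Irreducible S → S ^ m S ∣ P ∧ ¬ S ^ (m S + 1) ∣ P)
    (hP : P.Monic)
    (hPsr : C (P.coeff 0)⁻¹ * P.reverse = P)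
    (hQ : Q.Monic) (hQirr : Irreducible Q) (hQdvd : Q ∣ P)
    (hQsr : C (Q.coeff 0)⁻¹ * Q.reverse = Q)
    (hQodd : Odd (m Q))
    (huniq : ∀ S : Polynomial (ZMod p), S.Monic → Irreducible S → S ∣ P →
      C (S.coeff 0)⁻¹ * S.reverse = S → Odd (m S) → S = Q)
    (T : Finset (Polynomial (ZMod p)))
    (hT1 : ∀ S ∈ T, S.Monic ∧ Irreducible S ∧ S ∣ P ∧ C (S.coeff 0)⁻¹ * S.reverse ≠ S)
    (hT2 : ∀ S : Polynomial (ZMod p), S.Monic → Irreducible S → S ∣ P →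
      C (S.coeff 0)⁻¹ * S.reverse ≠ S → (S ∈ T ↔ C (S.coeff 0)⁻¹ * S.reverse ∉ T)) :
    Nat.card {R : Polynomial (ZMod p) // R.Monic ∧
        P = R * Q * (C (R.coeff 0)⁻¹ * R.reverse)} =
      ∏ S ∈ T, (1 + m S) := by
  classical
  have hP0 : P ≠ 0 := hP.ne_zero
  have hPc0 : P.coeff 0 ≠ 0 := by
    intro h
    rw [h, inv_zero, map_zero, zero_mul] at hPsr
    exact hP0 hPsr.symm
  have hcoeff : ∀ R : Polynomial (ZMod p), R ∣ P → R.coeff 0 ≠ 0 := by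
    rintro R ⟨W, hW⟩ h
    apply hPc0
    rw [hW, mul_coeff_zero, h, zero_mul]
  have hropP : rop P = P := hPsr
  have hropQ : rop Q = Q := hQsr
  have hropdvd : ∀ S, S ∣ P → rop S ∣ P := by
    rintro S ⟨W, hW⟩
    have hS0 : S.coeff 0 ≠ 0 := hcoeff S ⟨W, hW⟩
    have hW0 : W.coeff 0 ≠ 0 := hcoeff W ⟨S, by rw [hW, mul_comm]⟩
    exact ⟨rop W, by rw [← hropP, hW, rop_mul hS0 hW0]⟩
  have hpowdvd : ∀ S, Irreducible S → ∀ k, (S ^ k ∣ P ↔ k ≤ m S) := by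
    intro S hirr k
    constructor
    · intro hk
      by_contra h
      exact (hm S hirr).2 (dvd_trans (pow_dvd_pow S (by omega)) hk)
    · intro hk
      exact dvd_trans (pow_dvd_pow S hk) (hm S hirr).1
  have hmpos : ∀ S, Irreducible S → S ∣ P → 1 ≤ m S := by
    intro S hirr hdvd
    exact (hpowdvd S hirr 1).mp (by simpa using hdvd)
  have hmrop : ∀ S, S.Monic → Irreducible S → S ∣ P → m (rop S) = m S := by
    intro S hmon hirr hdvd
    have h0 := hcoeff S hdvd
    have hirr' := rop_irreducible hmon h0 hirr
    have h1 : rop S ^ m S ∣ P := by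
      rw [← rop_pow h0]
      exact hropdvd _ (hm S hirr).1
    have h2 : S ^ m (rop S) ∣ P := by
      have h3 := hropdvd _ (hm (rop S) hirr').1
      rwa [rop_pow (rop_coeff_zero_ne hmon h0), rop_rop hmon h0] at h3
    have a1 := (hpowdvd _ hirr' _).mp h1
    have a2 := (hpowdvd S hirr _).mp h2
    omega
  set F := normalizedFactors P with hF
  have count_eq : ∀ S : Polynomial (ZMod p), S.Monic → Irreducible S → F.count S = m S :=
    fun S hmon hirr =>
      count_normalizedFactors_eq hirr hmon.normalize_eq_self (hm S hirr).1 (hm S hirr).2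
  have memF : ∀ S : Polynomial (ZMod p), S.Monic → Irreducible S → S ∣ P → S ∈ F := by
    intro S hmon hirr hdvd
    rw [← Multiset.count_pos, count_eq S hmon hirr]
    exact hmpos S hirr hdvd
  have memF' : ∀ S ∈ F, S.Monic ∧ Irreducible S ∧ S ∣ P ∧ S.coeff 0 ≠ 0 := by
    intro S hS
    have hirr := irreducible_of_normalized_factor S hS
    have hmon : S.Monic := by
      rw [← normalize_normalized_factor S hS]
      exact monic_normalize hirr.ne_zero
    have hdvd := dvd_of_mem_normalizedFactors hS
    exact ⟨hmon, hirr, hdvd, hcoeff S hdvd⟩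
  have nf_prod : ∀ N : Multiset (Polynomial (ZMod p)), (∀ x ∈ N, x.Monic ∧ Irreducible x) →
      normalizedFactors N.prod = N := by
    intro N hN
    rw [normalizedFactors_prod_eq N fun a ha => (hN a ha).2]
    exact (Multiset.map_congr rfl fun x hx => (hN x hx).1.normalize_eq_self).trans
      (Multiset.map_id N)
  have prodF : F.prod = P := by
    have hmonF : F.prod.Monic := by
      have := monic_multiset_prod_of_monic F id fun i hi => (memF' i hi).1
      simpa using this
    exact eq_of_monic_of_associated hmonF hP (prod_normalizedFactors hP0)
  have hQmem : Q ∈ F := memF Q hQ hQirr hQdvd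
  have count_map_rop : ∀ N : Multiset (Polynomial (ZMod p)), (∀ x ∈ N, x ∈ F) →
      ∀ S ∈ F, (N.map rop).count S = N.count (rop S) := by
    intro N hsub S hS
    obtain ⟨hSmon, hSirr, hSdvd, hS0⟩ := memF' S hS
    rw [Multiset.count_map, Multiset.count_eq_card_filter_eq]
    congr 1
    apply Multiset.filter_congr
    intro x hx
    obtain ⟨hxmon, hxirr, hxdvd, hx0⟩ := memF' x (hsub x hx)
    constructor
    · intro h; rw [h, rop_rop hxmon hx0]
    · intro h; rw [← h, rop_rop hSmon hS0]
  have count_map_rop_zero : ∀ N : Multiset (Polynomial (ZMod p)), (∀ x ∈ N, x ∈ F) →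
      ∀ S, S ∉ F → (N.map rop).count S = 0 := by
    intro N hsub S hS
    rw [Multiset.count_eq_zero]
    intro hmem
    obtain ⟨a, ha, rfl⟩ := Multiset.mem_map.mp hmem
    obtain ⟨hamon, hairr, hadvd, ha0⟩ := memF' a (hsub a ha)
    exact hS (memF _ (rop_monic ha0) (rop_irreducible hamon ha0 hairr) (hropdvd a hadvd))
  have good_sub : ∀ N : Multiset (Polynomial (ZMod p)),
      F = N + {Q} + N.map rop → ∀ x ∈ N, x ∈ F := by
    intro N hg x hx
    have hle : N ≤ F := by
      rw [hg]
      exact le_trans (Multiset.le_add_right N {Q}) (Multiset.le_add_right _ _)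
    exact Multiset.mem_of_le hle hx
  have good_cnt : ∀ N : Multiset (Polynomial (ZMod p)), F = N + {Q} + N.map rop → ∀ S ∈ F,
      m S = N.count S + (if S = Q then 1 else 0) + N.count (rop S) := by
    intro N hg S hS
    obtain ⟨hSmon, hSirr, hSdvd, hS0⟩ := memF' S hS
    have h := congrArg (Multiset.count S) hg
    rwa [count_eq S hSmon hSirr, Multiset.count_add, Multiset.count_add,
      Multiset.count_singleton, count_map_rop N (good_sub N hg) S hS] at h
  have factor_facts : ∀ S ∈ F, rop S ∈ F ∧ rop (rop S) = S ∧ m (rop S) = m S := by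
    intro S hS
    obtain ⟨hSmon, hSirr, hSdvd, hS0⟩ := memF' S hS
    exact ⟨memF _ (rop_monic hS0) (rop_irreducible hSmon hS0 hSirr) (hropdvd S hSdvd),
      rop_rop hSmon hS0, hmrop S hSmon hSirr hSdvd⟩
  have rop_in_T : ∀ S ∈ F, rop S ≠ S → S ∉ T → rop S ∈ T := by
    intro S hS hsr hT
    obtain ⟨hropmem, hroprop, hmr⟩ := factor_facts S hS
    obtain ⟨hrmon, hrirr, hrdvd, hr0⟩ := memF' _ hropmem
    have hiff := hT2 (rop S) hrmon hrirr hrdvd (by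
      show rop (rop S) ≠ rop S
      rw [hroprop]
      exact fun h => hsr h.symm)
    rw [show (C ((rop S).coeff 0)⁻¹ * (rop S).reverse : Polynomial (ZMod p))
      = rop (rop S) from rfl, hroprop] at hiff
    exact hiff.mpr hT
  have good_unique : ∀ N₁ N₂ : Multiset (Polynomial (ZMod p)),
      F = N₁ + {Q} + N₁.map rop → F = N₂ + {Q} + N₂.map rop →
      (∀ S ∈ T, N₁.count S = N₂.count S) → N₁ = N₂ := by
    intro N₁ N₂ h₁ h₂ hTeq
    ext S
    by_cases hS : S ∈ F
    · obtain ⟨hropmem, hroprop, hmr⟩ := factor_facts S hS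
      have e₁ := good_cnt N₁ h₁ S hS
      have e₂ := good_cnt N₂ h₂ S hS
      by_cases hsr : rop S = S
      · rw [hsr] at e₁ e₂; omega
      · by_cases hT : S ∈ T
        · exact hTeq S hT
        · have := hTeq (rop S) (rop_in_T S hS hsr hT)
          omega
    · have z₁ : N₁.count S = 0 := by
        rw [Multiset.count_eq_zero]; exact fun h => hS (good_sub N₁ h₁ S h)
      have z₂ : N₂.count S = 0 := by
        rw [Multiset.count_eq_zero]; exact fun h => hS (good_sub N₂ h₂ S h)
      rw [z₁, z₂]
  -- construction of a good multiset from exponent data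
  have main : ∀ f : (S : {x // x ∈ T}) → Fin (m S.1 + 1),
      ∃ N : Multiset (Polynomial (ZMod p)),
        (F = N + {Q} + N.map rop) ∧ (∀ S, ∀ h : S ∈ T, N.count S = (f ⟨S, h⟩ : ℕ)) := by
    intro f
    set f' : Polynomial (ZMod p) → ℕ :=
      fun S => if h : S ∈ T then (f ⟨S, h⟩ : ℕ) else 0 with hf'
    set e : Polynomial (ZMod p) → ℕ := fun S =>
      if S = Q then (m Q - 1) / 2
      else if rop S = S then m S / 2
      else if S ∈ T then f' S
      else m S - f' (rop S) with he
    set N : Multiset (Polynomial (ZMod p)) :=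
      ∑ S ∈ F.toFinset, Multiset.replicate (e S) S with hN
    have f'_le : ∀ S, f' S ≤ m S := by
      intro S
      simp only [hf']
      split
      · exact Fin.is_le _
      · exact Nat.zero_le _
    have f'_eq : ∀ S, ∀ h : S ∈ T, f' S = (f ⟨S, h⟩ : ℕ) := by
      intro S h
      simp only [hf', dif_pos h]
    have count_N : ∀ S, N.count S = if S ∈ F.toFinset then e S else 0 := by
      intro S
      rw [hN, Multiset.count_sum']
      simp only [Multiset.count_replicate]
      exact Finset.sum_ite_eq' F.toFinset S e
    have memN : ∀ x ∈ N, x ∈ F := by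
      intro x hx
      have h := Multiset.count_pos.mpr hx
      rw [count_N] at h
      by_cases hh : x ∈ F.toFinset
      · exact Multiset.mem_toFinset.mp hh
      · rw [if_neg hh] at h; omega
    have e_T : ∀ S, ∀ h : S ∈ T, e S = f' S := by
      intro S h
      have hsr : rop S ≠ S := (hT1 S h).2.2.2
      have hQS : S ≠ Q := by
        intro hEq
        exact hsr (by rw [hEq]; exact hropQ)
      simp only [he]
      rw [if_neg hQS, if_neg hsr, if_pos h]
    have hgoodN : F = N + {Q} + N.map rop := by
      ext S
      rw [Multiset.count_add, Multiset.count_add, Multiset.count_singleton]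
      by_cases hS : S ∈ F
      · obtain ⟨hSmon, hSirr, hSdvd, hS0⟩ := memF' S hS
        obtain ⟨hropmem, hroprop, hmr⟩ := factor_facts S hS
        rw [count_eq S hSmon hSirr, count_map_rop N memN S hS,
          count_N, count_N, if_pos (Multiset.mem_toFinset.mpr hS),
          if_pos (Multiset.mem_toFinset.mpr hropmem)]
        by_cases hQS : S = Q
        · have hrS : rop S = Q := by rw [hQS, hropQ]
          have he1 : e S = (m Q - 1) / 2 := by simp [he, hQS]
          have he2 : e (rop S) = (m Q - 1) / 2 := by simp [he, hrS]
          rw [if_pos hQS, he1, he2, hQS]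
          obtain ⟨k, hk⟩ := hQodd
          omega
        · rw [if_neg hQS]
          by_cases hsr : rop S = S
          · rw [hsr]
            have hev : ¬ Odd (m S) := fun ho => hQS (huniq S hSmon hSirr hSdvd hsr ho)
            rw [Nat.not_odd_iff_even] at hev
            obtain ⟨k, hk⟩ := hev
            have he1 : e S = m S / 2 := by
              simp only [he]; rw [if_neg hQS, if_pos hsr]
            rw [he1]
            omega
          · have hropQ' : rop S ≠ Q := by
              intro h
              apply hsr
              have hSQ : S = Q := by rw [← hroprop, h, hropQ]
              rw [h, hSQ]
            have hrsr : rop (rop S) ≠ rop S := by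
              rw [hroprop]
              exact fun h => hsr h.symm
            by_cases hT : S ∈ T
            · have hTr : rop S ∉ T := by
                intro h
                obtain ⟨hrmon, hrirr, hrdvd, hr0⟩ := memF' _ hropmem
                have hiff := hT2 S hSmon hSirr hSdvd hsr
                exact (hiff.mp hT) h
              have he1 : e S = f' S := e_T S hT
              have he2 : e (rop S) = m (rop S) - f' (rop (rop S)) := by
                simp only [he]
                rw [if_neg hropQ', if_neg hrsr, if_neg hTr]
              have hle := f'_le S
              rw [he1, he2, hroprop, hmr]
              omega
            · have hTr : rop S ∈ T := rop_in_T S hS hsr hT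
              have he1 : e S = m S - f' (rop S) := by
                simp only [he]
                rw [if_neg hQS, if_neg hsr, if_neg hT]
              have he2 : e (rop S) = f' (rop S) := e_T (rop S) hTr
              have hle : f' (rop S) ≤ m S := le_trans (f'_le (rop S)) (le_of_eq hmr)
              rw [he1, he2]
              omega
      · have h1 : F.count S = 0 := Multiset.count_eq_zero.mpr hS
        have h2 : N.count S = 0 := by
          rw [count_N, if_neg]
          intro h; exact hS (Multiset.mem_toFinset.mp h)
        have hQS : ¬ S = Q := fun h => hS (h ▸ hQmem)
        have h3 : (N.map rop).count S = 0 := count_map_rop_zero N memN S hS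
        rw [h1, h2, h3, if_neg hQS]
      -- done with hgoodN
    refine ⟨N, hgoodN, ?_⟩
    intro S h
    obtain ⟨hSm, hSi, hSd, _⟩ := hT1 S h
    rw [count_N, if_pos (Multiset.mem_toFinset.mpr (memF S hSm hSi hSd)), e_T S h, f'_eq S h]
  -- translating between good multisets and solutions
  have good_to_sol : ∀ N : Multiset (Polynomial (ZMod p)), F = N + {Q} + N.map rop →
      (N.prod.Monic ∧ P = N.prod * Q * rop N.prod) ∧ normalizedFactors N.prod = N := by
    intro N hg
    have hsub := good_sub N hg
    have hmi : ∀ x ∈ N, x.Monic ∧ Irreducible x := fun x hx =>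
      ⟨(memF' x (hsub x hx)).1, (memF' x (hsub x hx)).2.1⟩
    have hc0 : ∀ x ∈ N, x.coeff 0 ≠ 0 := fun x hx => (memF' x (hsub x hx)).2.2.2
    have hmonN : N.prod.Monic := by
      have := monic_multiset_prod_of_monic N id fun i hi => (hmi i hi).1
      simpa using this
    have hnf : normalizedFactors N.prod = N := nf_prod N hmi
    have hprodeq : P = N.prod * Q * rop N.prod := by
      have h := congrArg Multiset.prod hg
      rwa [prodF, Multiset.prod_add, Multiset.prod_add, Multiset.prod_singleton,
        ← rop_prod hc0] at h
    exact ⟨⟨hmonN, hprodeq⟩, hnf⟩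
  have sol_to_good : ∀ R : Polynomial (ZMod p), R.Monic → P = R * Q * rop R →
      F = normalizedFactors R + {Q} + (normalizedFactors R).map rop ∧
        (normalizedFactors R).prod = R := by
    intro R hmon hPeq
    have hR0 : R ≠ 0 := hmon.ne_zero
    have hRdvd : R ∣ P := ⟨Q * rop R, by rw [hPeq]; ring⟩
    have hNmi : ∀ x ∈ normalizedFactors R, x.Monic ∧ Irreducible x := by
      intro x hx
      have hirr := irreducible_of_normalized_factor x hx
      exact ⟨by rw [← normalize_normalized_factor x hx]; exact monic_normalize hirr.ne_zero,
        hirr⟩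
    have hNc0 : ∀ x ∈ normalizedFactors R, x.coeff 0 ≠ 0 := fun x hx =>
      hcoeff x (dvd_trans (dvd_of_mem_normalizedFactors hx) hRdvd)
    have hNprod : (normalizedFactors R).prod = R := by
      have hm2 := monic_multiset_prod_of_monic (normalizedFactors R) id
        fun i hi => (hNmi i hi).1
      exact eq_of_monic_of_associated (by simpa using hm2) hmon (prod_normalizedFactors hR0)
    refine ⟨?_, hNprod⟩
    have hall : ∀ x ∈ normalizedFactors R + {Q} + (normalizedFactors R).map rop,
        x.Monic ∧ Irreducible x := by
      intro x hx
      rcases Multiset.mem_add.mp hx with hx | hx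
      · rcases Multiset.mem_add.mp hx with hx | hx
        · exact hNmi x hx
        · rw [Multiset.mem_singleton.mp hx]; exact ⟨hQ, hQirr⟩
      · obtain ⟨a, ha, rfl⟩ := Multiset.mem_map.mp hx
        exact ⟨rop_monic (hNc0 a ha),
          rop_irreducible (hNmi a ha).1 (hNc0 a ha) (hNmi a ha).2⟩
    have hprodM : (normalizedFactors R + {Q} + (normalizedFactors R).map rop).prod = P := by
      rw [Multiset.prod_add, Multiset.prod_add, Multiset.prod_singleton,
        ← rop_prod hNc0, hNprod]
      exact hPeq.symm
    rw [hF, ← hprodM]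
    exact nf_prod _ hall
  -- the bijection
  let D := (S : {x // x ∈ T}) → Fin (m S.1 + 1)
  let G : D → {R : Polynomial (ZMod p) // R.Monic ∧
      P = R * Q * (C (R.coeff 0)⁻¹ * R.reverse)} := fun f =>
    ⟨((main f).choose).prod,
      (good_to_sol _ (main f).choose_spec.1).1.1,
      (good_to_sol _ (main f).choose_spec.1).1.2⟩
  have hGbij : Function.Bijective G := by
    constructor
    · intro f g hfg
      have hprod : ((main f).choose).prod = ((main g).choose).prod :=
        congrArg Subtype.val hfg
      have hNeq : (main f).choose = (main g).choose := by
        rw [← (good_to_sol _ (main f).choose_spec.1).2,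
          ← (good_to_sol _ (main g).choose_spec.1).2, hprod]
      funext S
      apply Fin.ext
      rw [← (main f).choose_spec.2 S.1 S.2, ← (main g).choose_spec.2 S.1 S.2, hNeq]
    · rintro ⟨R, hmon, hPeq⟩
      obtain ⟨hgR, hprodR⟩ := sol_to_good R hmon hPeq
      have hbound : ∀ S, ∀ h : S ∈ T, (normalizedFactors R).count S < m S + 1 := by
        intro S h
        obtain ⟨hSm, hSi, hSd, _⟩ := hT1 S h
        have hle : normalizedFactors R ≤ F := by
          rw [hgR]
          exact le_trans (Multiset.le_add_right _ _) (Multiset.le_add_right _ _)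
        have hc := Multiset.count_le_of_le S hle
        rw [count_eq S hSm hSi] at hc
        omega
      set f₀ : D := fun S => ⟨(normalizedFactors R).count S.1, hbound S.1 S.2⟩ with hf₀
      refine ⟨f₀, ?_⟩
      have hNeq : (main f₀).choose = normalizedFactors R := by
        apply good_unique _ _ (main f₀).choose_spec.1 hgR
        intro S hST
        rw [(main f₀).choose_spec.2 S hST, hf₀]
      apply Subtype.ext
      show ((main f₀).choose).prod = R
      rw [hNeq, hprodR]
  rw [← Nat.card_eq_of_bijective G hGbij]
  rw [Nat.card_eq_fintype_card, Fintype.card_pi]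
  simp only [Fintype.card_fin]
  rw [Finset.prod_coe_sort T (fun S => m S + 1)]
  exact Finset.prod_congr rfl fun S _ => by omega
end

section
/- Let p be an odd prime, V an n-dimensional quadratic space over Q_p, π the reflection with respect to an anisotropic vector y ∈ V with (y,y) ∈ p·Z_p^× (after scaling), and V^π = y^⊥. Write vertex lattices in V^π as lattices Λ with pΛ ⊆ Λ^∨ ⊆ Λ, and H-vertex lattices in V as lattices Λ̃ with pΛ̃ ⊆ Λ̃^♮ ⊆ Λ̃. Then the maps Λ ↦ Λ ⊕ p^{-1} y Z_p and Λ̃ ↦ Λ̃ ∩ V^π are mutually inverse bijections between vertex lattices in V^π and H-vertex lattices in V containing p^{-1}y; moreover this bijection sends type t to type t+1. -/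
section Aux

variable {p : ℕ} [Fact p.Prime] {V : Type*} [AddCommGroup V]
  [Module ℚ_[p] V] [Module ℤ_[p] V] [IsScalarTower ℤ_[p] ℚ_[p] V]

theorem aux_smul (a : ℤ_[p]) (x : V) : a • x = (a : ℚ_[p]) • x := by
  rw [← PadicInt.algebraMap_apply, algebraMap_smul]

noncomputable def clMap (Λt : Submodule ℤ_[p] V) (c : V →ₗ[ℚ_[p]] ℚ_[p])
    (h : ∀ x ∈ Λt, ‖c x‖ ≤ 1) : ↥Λt →ₗ[ℤ_[p]] ℤ_[p] where
  toFun x := ⟨c x.1, h x.1 x.2⟩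
  map_add' x z := by
    apply Subtype.ext
    simp
    exact (PadicInt.coe_add (⟨c x.1, h x.1 x.2⟩ : ℤ_[p]) ⟨c z.1, h z.1 z.2⟩).symm
  map_smul' a x := by
    apply Subtype.ext
    simp [aux_smul a (x : V)]
    exact (PadicInt.coe_mul a (⟨c x.1, h x.1 x.2⟩ : ℤ_[p])).symm

noncomputable def prMap (Λ Λt : Submodule ℤ_[p] V) (c : V →ₗ[ℚ_[p]] ℚ_[p]) (u : V)
    (h : ∀ x ∈ Λt, ‖c x‖ ≤ 1) (h2 : ∀ x ∈ Λt, x - c x • u ∈ Λ) : ↥Λt →ₗ[ℤ_[p]] ↥Λ where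
  toFun x := ⟨x.1 - c x.1 • u, h2 x.1 x.2⟩
  map_add' x z := by
    apply Subtype.ext
    simp [add_smul]
    abel
  map_smul' a x := by
    apply Subtype.ext
    simp [aux_smul a (x : V), aux_smul a (x.1 - c x.1 • u), smul_sub, mul_smul]

theorem aux_smul_mem (N : Submodule ℤ_[p] V) {q : ℚ_[p]} (hq : ‖q‖ ≤ 1) {w : V}
    (hw : w ∈ N) : q • w ∈ N := by
  let z : ℤ_[p] := ⟨q, hq⟩
  have : q • w = z • w := (aux_smul z w).symm
  rw [this]
  exact N.smul_mem _ hw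

theorem aux_card (p : ℕ) [Fact p.Prime] :
    Nat.card (ℤ_[p] ⧸ (Ideal.span {(p : ℤ_[p])} : Ideal ℤ_[p])) = p := by
  haveI : NeZero p := ⟨(Fact.out : p.Prime).ne_zero⟩
  have hsurj : Function.Surjective (PadicInt.toZMod : ℤ_[p] →+* ZMod p) := by
    intro k
    exact ⟨((k.val : ℕ) : ℤ_[p]), by rw [map_natCast]; exact ZMod.natCast_rightInverse k⟩
  have h1 : (Ideal.span {(p : ℤ_[p])} : Ideal ℤ_[p]) = RingHom.ker PadicInt.toZMod := by
    rw [PadicInt.ker_toZMod, PadicInt.maximalIdeal_eq_span_p]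
  rw [h1]
  rw [Nat.card_congr (RingHom.quotientKerEquivOfSurjective hsurj).toEquiv]
  exact Nat.card_zmod p

end Aux

set_option maxHeartbeats 1000000 in
set_option synthInstance.maxHeartbeats 400000 in
/-- let `p` be an odd prime, `(V, B)` a nondegenerate quadratic space over
`ℚ_p`, `y` an anisotropic vector with `(y,y) ∈ p·ℤ_p^×` (i.e. `‖B y y‖ = 1/p`), and
`V^π = y^⊥` the fixed space of the reflection in `y`.  Then `Λ ↦ Λ ⊕ ℤ_p·(p⁻¹y)` and
`Λ̃ ↦ Λ̃ ∩ V^π` are mutually inverse bijections between vertex lattices in `V^π`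
(`pΛ ⊆ Λ^∨ ⊆ Λ`, dual taken in `V^π`) and H-vertex lattices in `V` (`pΛ̃ ⊆ Λ̃^♮ ⊆ Λ̃`)
containing `p⁻¹y`; moreover this bijection sends type `t` to type `t + 1`. -/
theorem stmt_18 (p : ℕ) [Fact p.Prime] (hp : p ≠ 2)
    (V : Type*) [AddCommGroup V] [Module ℚ_[p] V] [Module ℤ_[p] V]
    [IsScalarTower ℤ_[p] ℚ_[p] V] [FiniteDimensional ℚ_[p] V]
    (B : LinearMap.BilinForm ℚ_[p] V)
    (hsymm : ∀ x y, B x y = B y x)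
    (hnd : ∀ x, (∀ z, B x z = 0) → x = 0)
    (y : V) (hy : ‖B y y‖ = (p : ℝ)⁻¹) :
    -- forward direction: a vertex lattice `Λ` in `y^⊥` yields the H-vertex lattice
    -- `Λ ⊔ ℤ_p·(p⁻¹y)`, which contains `p⁻¹y`, meets `y^⊥` in `Λ`, and has type `t + 1`
    (∀ Λ Λd : Submodule ℤ_[p] V,
      Λ.FG →
      (Λ : Set V) ⊆ {x | B x y = 0} →
      Submodule.span ℚ_[p] (Λ : Set V) = LinearMap.ker (B y) →
      (Λd : Set V) = {x | B x y = 0 ∧ ∀ z ∈ Λ, ‖B x z‖ ≤ 1} →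
      (∀ x ∈ Λ, (p : ℤ_[p]) • x ∈ Λd) → Λd ≤ Λ →
      ∀ Λt Λtd : Submodule ℤ_[p] V,
        Λt = Λ ⊔ Submodule.span ℤ_[p] ({(p : ℚ_[p])⁻¹ • y} : Set V) →
        (Λtd : Set V) = {x | ∀ z ∈ Λt, ‖B x z‖ ≤ 1} →
        (Λt.FG ∧ Submodule.span ℚ_[p] (Λt : Set V) = ⊤ ∧
          (p : ℚ_[p])⁻¹ • y ∈ Λt ∧
          (∀ x ∈ Λt, (p : ℤ_[p]) • x ∈ Λtd) ∧ Λtd ≤ Λt ∧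
          Λt ⊓ Submodule.restrictScalars ℤ_[p] (LinearMap.ker (B y)) = Λ ∧
          ∀ t : ℕ, Nat.card (↥Λ ⧸ Submodule.comap Λ.subtype Λd) = p ^ t →
            Nat.card (↥Λt ⧸ Submodule.comap Λt.subtype Λtd) = p ^ (t + 1))) ∧
    -- backward direction: an H-vertex lattice `Λ̃` containing `p⁻¹y` yields the vertex
    -- lattice `Λ̃ ∩ y^⊥` in `y^⊥`, and `(Λ̃ ∩ y^⊥) ⊔ ℤ_p·(p⁻¹y) = Λ̃`
    (∀ Λt Λtd : Submodule ℤ_[p] V,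
      Λt.FG →
      Submodule.span ℚ_[p] (Λt : Set V) = ⊤ →
      (Λtd : Set V) = {x | ∀ z ∈ Λt, ‖B x z‖ ≤ 1} →
      (∀ x ∈ Λt, (p : ℤ_[p]) • x ∈ Λtd) → Λtd ≤ Λt →
      (p : ℚ_[p])⁻¹ • y ∈ Λt →
      ∀ Λ Λd : Submodule ℤ_[p] V,
        Λ = Λt ⊓ Submodule.restrictScalars ℤ_[p] (LinearMap.ker (B y)) →
        (Λd : Set V) = {x | B x y = 0 ∧ ∀ z ∈ Λ, ‖B x z‖ ≤ 1} →
        (Λ.FG ∧ Submodule.span ℚ_[p] (Λ : Set V) = LinearMap.ker (B y) ∧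
          (∀ x ∈ Λ, (p : ℤ_[p]) • x ∈ Λd) ∧ Λd ≤ Λ ∧
          Λ ⊔ Submodule.span ℤ_[p] ({(p : ℚ_[p])⁻¹ • y} : Set V) = Λt)) := by
  have hprime : p.Prime := Fact.out
  have hp0R : (0:ℝ) < p := by exact_mod_cast hprime.pos
  have hp1R : (1:ℝ) < p := by exact_mod_cast hprime.one_lt
  have hpinv1 : (p:ℝ)⁻¹ ≤ 1 := by
    rw [inv_le_one_iff₀]; right; exact le_of_lt hp1R
  have hpQ : (p : ℚ_[p]) ≠ 0 := Nat.cast_ne_zero.mpr hprime.ne_zero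
  set u : V := (p : ℚ_[p])⁻¹ • y with hu_def
  have hByy : B y y ≠ 0 := by
    intro h
    rw [h, norm_zero] at hy
    have : (0:ℝ) < (p:ℝ)⁻¹ := by positivity
    rw [← hy] at this; exact lt_irrefl 0 this
  have hByu : B y u = (p:ℚ_[p])⁻¹ * B y y := by
    rw [hu_def, map_smul, smul_eq_mul]
  have hnByu : ‖B y u‖ = 1 := by
    rw [hByu, norm_mul, norm_inv, Padic.norm_p, hy, inv_inv]
    field_simp
  have hByu0 : B y u ≠ 0 := by
    intro h; rw [h, norm_zero] at hnByu; norm_num at hnByu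
  have hBuu_eq : B u u = (p:ℚ_[p])⁻¹ * B y u := by
    rw [hu_def]
    simp [smul_eq_mul]
  have hBuu : ‖B u u‖ = p := by
    rw [hBuu_eq, norm_mul, norm_inv, Padic.norm_p, hnByu, inv_inv, mul_one]
  -- the projection functional
  set c : V →ₗ[ℚ_[p]] ℚ_[p] := (B y u)⁻¹ • (B y) with hc_def
  have hc_apply : ∀ x : V, c x = (B y u)⁻¹ * B y x := by
    intro x; rw [hc_def]; simp
  have hc_u : c u = 1 := by rw [hc_apply]; exact inv_mul_cancel₀ hByu0
  have hc_zero : ∀ x : V, B y x = 0 → c x = 0 := by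
    intro x h; rw [hc_apply, h, mul_zero]
  have hker_c : ∀ x : V, B y (x - c x • u) = 0 := by
    intro x
    rw [map_sub, map_smul, smul_eq_mul, hc_apply]
    field_simp
    ring
  -- orthogonality against u
  have hBu_right : ∀ w : V, B y w = 0 → B w u = 0 := by
    intro w hw
    have h2 : B w y = 0 := (hsymm w y).trans hw
    rw [hu_def, map_smul, smul_eq_mul, h2, mul_zero]
  have hBu_left : ∀ w : V, B y w = 0 → B u w = 0 := fun w hw =>
    (hsymm u w).trans (hBu_right w hw)
  -- ultrametric bound for 4 terms
  have hmax4 : ∀ (a b c' d : ℚ_[p]) (r : ℝ), ‖a‖ ≤ r → ‖b‖ ≤ r → ‖c'‖ ≤ r → ‖d‖ ≤ r →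
      ‖a + b + c' + d‖ ≤ r := by
    intro a b c' d r ha hb hc hd
    refine le_trans (Padic.nonarchimedean _ _) (max_le ?_ hd)
    refine le_trans (Padic.nonarchimedean _ _) (max_le ?_ hc)
    exact le_trans (Padic.nonarchimedean _ _) (max_le ha hb)
  -- bilinear expansion
  have hBexp : ∀ (a b : V) (s t : ℚ_[p]),
      B (a + s • u) (b + t • u) = B a b + t * B a u + s * B u b + s * t * B u u := by
    intro a b s t
    simp only [map_add, map_smul, LinearMap.add_apply, LinearMap.smul_apply, smul_eq_mul]
    ring
  have hscale : ∀ w : ℚ_[p], ‖(p:ℚ_[p]) * w‖ ≤ 1 → ‖w‖ ≤ p := by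
    intro w h
    rw [norm_mul, Padic.norm_p] at h
    calc ‖w‖ = p * ((p:ℝ)⁻¹ * ‖w‖) := by field_simp
    _ ≤ p * 1 := mul_le_mul_of_nonneg_left h (le_of_lt hp0R)
    _ = p := mul_one _
  constructor
  · -- FORWARD DIRECTION
    intro Λ Λd hfg hsub hspan hΛdset hpΛ hΛdle Λt Λtd hΛt hΛtdset
    have hΛdmem : ∀ x : V, x ∈ Λd ↔ (B x y = 0 ∧ ∀ z ∈ Λ, ‖B x z‖ ≤ 1) := by
      intro x
      rw [← SetLike.mem_coe, hΛdset]; exact Iff.rfl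
    have hΛtdmem : ∀ x : V, x ∈ Λtd ↔ ∀ z ∈ Λt, ‖B x z‖ ≤ 1 := by
      intro x
      rw [← SetLike.mem_coe, hΛtdset]; exact Iff.rfl
    have hΛy : ∀ a ∈ Λ, B y a = 0 := fun a ha => (hsymm y a).trans (hsub ha)
    have hΛc : ∀ a ∈ Λ, c a = 0 := fun a ha => hc_zero a (hΛy a ha)
    have huΛt : u ∈ Λt := by
      rw [hΛt]; exact Submodule.mem_sup_right (Submodule.mem_span_singleton_self u)
    have hΛleΛt : Λ ≤ Λt := by rw [hΛt]; exact le_sup_left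
    have hdec : ∀ x ∈ Λt, ∃ a ∈ Λ, ∃ s : ℤ_[p], x = a + (s:ℚ_[p]) • u := by
      intro x hx
      rw [hΛt] at hx
      rcases Submodule.mem_sup.mp hx with ⟨a, ha, b, hb, rfl⟩
      rcases Submodule.mem_span_singleton.mp hb with ⟨s, rfl⟩
      exact ⟨a, ha, s, by rw [aux_smul]⟩
    have hcx : ∀ x ∈ Λt, ‖c x‖ ≤ 1 ∧ x - c x • u ∈ Λ := by
      intro x hx
      obtain ⟨a, ha, s, rfl⟩ := hdec x hx
      have hc1 : c (a + (s:ℚ_[p]) • u) = (s:ℚ_[p]) := by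
        rw [map_add, map_smul, hΛc a ha, hc_u, smul_eq_mul, mul_one, zero_add]
      constructor
      · rw [hc1, ← PadicInt.norm_def]; exact PadicInt.norm_le_one s
      · rw [hc1]; simpa using ha
    -- characterization of the dual of Λt
    have hΛtd_iff : ∀ x : V, x ∈ Λtd ↔ ((x - c x • u) ∈ Λd ∧ ‖c x‖ ≤ (p:ℝ)⁻¹) := by
      intro x
      rw [hΛtdmem]
      constructor
      · intro hx
        have hxu := hx u huΛt
        have hBxu : B x u = c x * B u u := by
          have h0 : B (x - c x • u) u = 0 := hBu_right _ (hker_c x)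
          have hexp : B (x - c x • u) u = B x u - c x * B u u := by
            simp [map_sub, map_smul, smul_eq_mul]
          rw [hexp] at h0
          exact sub_eq_zero.mp h0
        have hcnorm : ‖c x‖ ≤ (p:ℝ)⁻¹ := by
          rw [hBxu, norm_mul, hBuu] at hxu
          rw [← one_div]
          rw [le_div_iff₀ hp0R]
          exact hxu
        refine ⟨?_, hcnorm⟩
        rw [hΛdmem]
        refine ⟨(hsymm _ y).trans (hker_c x), ?_⟩
        intro z hz
        have hBuz : B u z = 0 := hBu_left z (hΛy z hz)
        have hexp : B (x - c x • u) z = B x z - c x * B u z := by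
          simp [map_sub, map_smul, smul_eq_mul]
        rw [hexp, hBuz, mul_zero, sub_zero]
        exact hx z (hΛleΛt hz)
      · rintro ⟨hd, hcn⟩ z hz
        obtain ⟨b, hb, t, rfl⟩ := hdec z hz
        rw [hΛdmem] at hd
        have hx'u : B (x - c x • u) u = 0 := by
          rw [hu_def, map_smul, smul_eq_mul, hd.1, mul_zero]
        have hub : B u b = 0 := hBu_left b (hΛy b hb)
        have hexp : B x (b + (t:ℚ_[p]) • u)
            = B (x - c x • u) b + (t:ℚ_[p]) * B (x - c x • u) u
              + c x * B u b + c x * (t:ℚ_[p]) * B u u := by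
          simp only [map_sub, map_smul, map_add, LinearMap.sub_apply, LinearMap.smul_apply,
            smul_eq_mul]
          ring
        rw [hexp]
        refine hmax4 _ _ _ _ 1 (hd.2 b hb) ?_ ?_ ?_
        · rw [hx'u, mul_zero, norm_zero]; norm_num
        · rw [hub, mul_zero, norm_zero]; norm_num
        · rw [norm_mul, norm_mul, hBuu, ← PadicInt.norm_def]
          calc ‖c x‖ * ‖t‖ * (p:ℝ) ≤ (p:ℝ)⁻¹ * 1 * (p:ℝ) := by
                apply mul_le_mul_of_nonneg_right _ (le_of_lt hp0R)
                exact mul_le_mul hcn (PadicInt.norm_le_one t) (norm_nonneg _) (by positivity)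
          _ = 1 := by field_simp
    refine ⟨?_, ?_, ?_, ?_, ?_, ?_, ?_⟩
    · -- FG
      rw [hΛt]
      exact hfg.sup (Submodule.fg_span_singleton _)
    · -- span = ⊤
      apply eq_top_iff.mpr
      rintro x -
      have h1 : x - c x • u ∈ Submodule.span ℚ_[p] (Λt : Set V) := by
        have h2 : x - c x • u ∈ Submodule.span ℚ_[p] (Λ : Set V) := by
          rw [hspan]
          exact LinearMap.mem_ker.mpr (hker_c x)
        exact Submodule.span_mono hΛleΛt h2
      have h2 : c x • u ∈ Submodule.span ℚ_[p] (Λt : Set V) :=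
        Submodule.smul_mem _ _ (Submodule.subset_span huΛt)
      have := Submodule.add_mem _ h1 h2
      rwa [sub_add_cancel] at this
    · -- u ∈ Λt
      exact huΛt
    · -- pΛt ⊆ Λtd
      intro x hx
      rw [hΛtdmem]
      intro z hz
      obtain ⟨a, ha, s, rfl⟩ := hdec x hx
      obtain ⟨b, hb, t, rfl⟩ := hdec z hz
      rw [aux_smul, map_smul, LinearMap.smul_apply, smul_eq_mul, norm_mul,
        ← PadicInt.norm_def, PadicInt.norm_p]
      have hmain : ‖B (a + (s:ℚ_[p]) • u) (b + (t:ℚ_[p]) • u)‖ ≤ (p:ℝ) := by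
        rw [hBexp]
        have hab : ‖B a b‖ ≤ (p:ℝ) := by
          apply hscale
          have := ((hΛdmem _).mp (hpΛ a ha)).2 b hb
          rw [aux_smul, map_smul, LinearMap.smul_apply, smul_eq_mul] at this
          push_cast at this
          exact this
        refine hmax4 _ _ _ _ (p:ℝ) hab ?_ ?_ ?_
        · rw [hBu_right a (hΛy a ha), mul_zero, norm_zero]; exact le_of_lt hp0R
        · rw [hBu_left b (hΛy b hb), mul_zero, norm_zero]; exact le_of_lt hp0R
        · rw [norm_mul, norm_mul, hBuu, ← PadicInt.norm_def, ← PadicInt.norm_def]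
          calc ‖s‖ * ‖t‖ * (p:ℝ) ≤ 1 * 1 * (p:ℝ) := by
                apply mul_le_mul_of_nonneg_right _ (le_of_lt hp0R)
                exact mul_le_mul (PadicInt.norm_le_one s) (PadicInt.norm_le_one t)
                  (norm_nonneg _) zero_le_one
          _ = (p:ℝ) := by ring
      calc (p:ℝ)⁻¹ * ‖B (a + (s:ℚ_[p]) • u) (b + (t:ℚ_[p]) • u)‖ ≤ (p:ℝ)⁻¹ * (p:ℝ) :=
            mul_le_mul_of_nonneg_left hmain (by positivity)
      _ = 1 := inv_mul_cancel₀ (ne_of_gt hp0R)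
    · -- Λtd ≤ Λt
      intro x hx
      obtain ⟨h1, h2⟩ := (hΛtd_iff x).mp hx
      have hcZ : ‖c x‖ ≤ 1 := le_trans h2 hpinv1
      have hxe : x = (x - c x • u) + c x • u := by abel
      rw [hΛt, hxe]
      refine Submodule.add_mem _ (Submodule.mem_sup_left (hΛdle h1)) ?_
      exact Submodule.mem_sup_right
        (aux_smul_mem _ hcZ (Submodule.mem_span_singleton_self u))
    · -- Λt ⊓ ker = Λ
      apply le_antisymm
      · rintro x hx
        obtain ⟨hx1, hx2⟩ := Submodule.mem_inf.mp hx
        obtain ⟨a, ha, s, rfl⟩ := hdec x hx1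
        have hBy : B y (a + (s:ℚ_[p]) • u) = (s:ℚ_[p]) * B y u := by
          rw [map_add, map_smul, hΛy a ha, zero_add, smul_eq_mul]
        have hx2' : B y (a + (s:ℚ_[p]) • u) = 0 :=
          LinearMap.mem_ker.mp (Submodule.restrictScalars_mem _ _ _ |>.mp hx2)
        rw [hBy] at hx2'
        have hs : (s:ℚ_[p]) = 0 := (mul_eq_zero.mp hx2').resolve_right hByu0
        rw [hs, zero_smul, add_zero]
        exact ha
      · intro a ha
        exact Submodule.mem_inf.mpr ⟨hΛleΛt ha,
          Submodule.restrictScalars_mem _ _ _ |>.mpr (LinearMap.mem_ker.mpr (hΛy a ha))⟩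
    · -- the type count
      intro t ht
      have hclb : ∀ x ∈ Λt, ‖c x‖ ≤ 1 := fun x hx => (hcx x hx).1
      have hprb : ∀ x ∈ Λt, x - c x • u ∈ Λ := fun x hx => (hcx x hx).2
      set I : Ideal ℤ_[p] := Ideal.span {(p : ℤ_[p])} with hI
      let cl := clMap Λt c hclb
      let pr := prMap Λ Λt c u hclb hprb
      let g : ↥Λt →ₗ[ℤ_[p]] (↥Λ ⧸ Submodule.comap Λ.subtype Λd) × (ℤ_[p] ⧸ I) :=
        ((Submodule.comap Λ.subtype Λd).mkQ.comp pr).prod (I.mkQ.comp cl)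
      have hgapp : ∀ x : ↥Λt, g x =
          (Submodule.Quotient.mk (pr x), Submodule.Quotient.mk (cl x)) := fun x => rfl
      have hgsurj : Function.Surjective g := by
        rintro ⟨qa, qb⟩
        obtain ⟨a, rfl⟩ := Submodule.Quotient.mk_surjective _ qa
        obtain ⟨b, rfl⟩ := Submodule.Quotient.mk_surjective _ qb
        have hmemx : a.1 + (b:ℚ_[p]) • u ∈ Λt := by
          refine Submodule.add_mem _ (hΛleΛt a.2) ?_
          rw [← aux_smul]
          rw [hΛt]
          exact Submodule.mem_sup_right
            (Submodule.smul_mem _ _ (Submodule.mem_span_singleton_self u))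
        refine ⟨⟨a.1 + (b:ℚ_[p]) • u, hmemx⟩, ?_⟩
        have hc1 : c (a.1 + (b:ℚ_[p]) • u) = (b:ℚ_[p]) := by
          rw [map_add, map_smul, hΛc a.1 a.2, hc_u, smul_eq_mul, mul_one, zero_add]
        rw [hgapp]
        have hcl : cl ⟨a.1 + (b:ℚ_[p]) • u, hmemx⟩ = b := by
          apply Subtype.ext
          exact hc1
        have hpr : pr ⟨a.1 + (b:ℚ_[p]) • u, hmemx⟩ = a := by
          apply Subtype.ext
          show a.1 + (b:ℚ_[p]) • u - c (a.1 + (b:ℚ_[p]) • u) • u = a.1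
          rw [hc1, add_sub_cancel_right]
        rw [hcl, hpr]
      have hker : LinearMap.ker g = Submodule.comap Λt.subtype Λtd := by
        ext x
        rw [LinearMap.mem_ker, hgapp, Submodule.mem_comap, Prod.mk_eq_zero,
          Submodule.Quotient.mk_eq_zero, Submodule.Quotient.mk_eq_zero,
          Submodule.mem_comap]
        have hclx : (cl x : ℚ_[p]) = c x.1 := rfl
        have hprx : (pr x : V) = x.1 - c x.1 • u := rfl
        rw [Submodule.subtype_apply, Submodule.subtype_apply, hprx]
        have hIiff : cl x ∈ I ↔ ‖c x.1‖ ≤ (p:ℝ)⁻¹ := by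
          rw [hI]
          have := PadicInt.norm_le_pow_iff_mem_span_pow (cl x) 1
          rw [pow_one] at this
          rw [← this, PadicInt.norm_def, hclx]
          norm_num
        rw [hIiff, hΛtd_iff x.1]
      have e : (↥Λt ⧸ Submodule.comap Λt.subtype Λtd) ≃ₗ[ℤ_[p]]
          (↥Λ ⧸ Submodule.comap Λ.subtype Λd) × (ℤ_[p] ⧸ I) :=
        (Submodule.quotEquivOfEq _ _ hker.symm).trans (g.quotKerEquivOfSurjective hgsurj)
      rw [Nat.card_congr e.toEquiv, Nat.card_prod, ht, aux_card, pow_succ]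
  · -- BACKWARD DIRECTION
    intro Λt Λtd hfg hspan hΛtdset hpt hdt huΛt' Λ Λd hΛdef hΛdset
    have huΛt : u ∈ Λt := huΛt'
    have hΛtdmem : ∀ x : V, x ∈ Λtd ↔ ∀ z ∈ Λt, ‖B x z‖ ≤ 1 := by
      intro x
      rw [← SetLike.mem_coe, hΛtdset]; exact Iff.rfl
    have hΛdmem : ∀ x : V, x ∈ Λd ↔ (B x y = 0 ∧ ∀ z ∈ Λ, ‖B x z‖ ≤ 1) := by
      intro x
      rw [← SetLike.mem_coe, hΛdset]; exact Iff.rfl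
    have hΛmem : ∀ x : V, x ∈ Λ ↔ (x ∈ Λt ∧ B y x = 0) := by
      intro x
      rw [hΛdef, Submodule.mem_inf]
      constructor
      · rintro ⟨h1, h2⟩
        exact ⟨h1, LinearMap.mem_ker.mp (Submodule.restrictScalars_mem _ _ _ |>.mp h2)⟩
      · rintro ⟨h1, h2⟩
        exact ⟨h1, Submodule.restrictScalars_mem _ _ _ |>.mpr (LinearMap.mem_ker.mpr h2)⟩
    have hΛleΛt : Λ ≤ Λt := fun x hx => ((hΛmem x).mp hx).1
    have hΛy : ∀ a ∈ Λ, B y a = 0 := fun a ha => ((hΛmem a).mp ha).2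
    -- key computational input
    have hkey : ∀ z ∈ Λt, ‖c z‖ ≤ 1 ∧ z - c z • u ∈ Λ := by
      intro z hz
      have hBzu : B z u = c z * B u u := by
        have h0 : B (z - c z • u) u = 0 := hBu_right _ (hker_c z)
        have hexp : B (z - c z • u) u = B z u - c z * B u u := by
          simp [map_sub, map_smul, smul_eq_mul]
        rw [hexp] at h0
        exact sub_eq_zero.mp h0
      have hbound : ‖B z u‖ ≤ (p:ℝ) := by
        apply hscale
        have := (hΛtdmem _).mp (hpt z hz) u huΛt
        rw [aux_smul, LinearMap.map_smul₂, smul_eq_mul] at this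
        push_cast at this
        exact this
      have hcz : ‖c z‖ ≤ 1 := by
        rw [hBzu, norm_mul, hBuu] at hbound
        nlinarith [norm_nonneg (c z)]
      refine ⟨hcz, ?_⟩
      rw [hΛmem]
      constructor
      · exact Submodule.sub_mem _ hz (aux_smul_mem _ hcz huΛt)
      · exact hker_c z
    refine ⟨?_, ?_, ?_, ?_, ?_⟩
    · -- FG
      haveI : IsNoetherian ℤ_[p] ↥Λt := isNoetherian_of_fg_of_noetherian _ hfg
      have h1 : (Submodule.comap Λt.subtype Λ).FG := IsNoetherian.noetherian _
      have h2 : Submodule.map Λt.subtype (Submodule.comap Λt.subtype Λ) = Λ := by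
        rw [Submodule.map_comap_subtype]
        exact inf_eq_right.mpr hΛleΛt
      rw [← h2]
      exact h1.map _
    · -- span = ker
      apply le_antisymm
      · rw [Submodule.span_le]
        intro x hx
        exact LinearMap.mem_ker.mpr (hΛy x hx)
      · intro v hv
        have hv' : B y v = 0 := LinearMap.mem_ker.mp hv
        -- clear denominators
        have hdenom : ∀ w : V, ∃ n : ℕ, ((p:ℚ_[p])^n) • w ∈ Λt := by
          intro w
          have hw : w ∈ Submodule.span ℚ_[p] (Λt : Set V) := by rw [hspan]; trivial
          refine Submodule.span_induction ?_ ?_ ?_ ?_ hw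
          · intro x hx; exact ⟨0, by simpa using hx⟩
          · exact ⟨0, by simp⟩
          · rintro x z - - ⟨n, hn⟩ ⟨m, hm⟩
            refine ⟨n + m, ?_⟩
            have hx1 : ((p:ℚ_[p])^(n+m)) • x = ((p:ℤ_[p])^m) • (((p:ℚ_[p])^n) • x) := by
              rw [aux_smul, smul_smul]
              congr 1
              push_cast
              ring
            have hz1 : ((p:ℚ_[p])^(n+m)) • z = ((p:ℤ_[p])^n) • (((p:ℚ_[p])^m) • z) := by
              rw [aux_smul, smul_smul]
              congr 1
              push_cast
              ring
            rw [smul_add, hx1, hz1]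
            exact Submodule.add_mem _ (Submodule.smul_mem _ _ hn) (Submodule.smul_mem _ _ hm)
          · rintro q x - ⟨n, hn⟩
            obtain ⟨m, hm⟩ := pow_unbounded_of_one_lt ‖q‖ hp1R
            have hmb : ‖(p:ℚ_[p])^m * q‖ ≤ 1 := by
              rw [norm_mul, norm_pow, Padic.norm_p]
              rw [inv_pow]
              calc ((p:ℝ)^m)⁻¹ * ‖q‖ ≤ ((p:ℝ)^m)⁻¹ * (p:ℝ)^m := by
                    apply mul_le_mul_of_nonneg_left (le_of_lt hm) (by positivity)
              _ = 1 := inv_mul_cancel₀ (by positivity)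
            refine ⟨m + n, ?_⟩
            have hqd : ((p:ℚ_[p])^(m+n)) • (q • x) = ((p:ℚ_[p])^m * q) • (((p:ℚ_[p])^n) • x) := by
              rw [smul_smul, smul_smul]
              congr 1
              ring
            rw [hqd]
            exact aux_smul_mem _ hmb hn
        obtain ⟨n, hn⟩ := hdenom v
        have hmem : ((p:ℚ_[p])^n) • v ∈ Λ := by
          rw [hΛmem]
          refine ⟨hn, ?_⟩
          rw [map_smul, hv', smul_zero]
        have : v = ((p:ℚ_[p])^n)⁻¹ • (((p:ℚ_[p])^n) • v) := by
          rw [inv_smul_smul₀ (pow_ne_zero _ hpQ)]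
        rw [this]
        exact Submodule.smul_mem _ _ (Submodule.subset_span hmem)
    · -- pΛ ⊆ Λd
      intro x hx
      rw [hΛdmem]
      constructor
      · rw [aux_smul, map_smul, LinearMap.smul_apply, smul_eq_mul]
        have : B x y = 0 := (hsymm x y).trans (hΛy x hx)
        rw [this, mul_zero]
      · intro z hz
        exact (hΛtdmem _).mp (hpt x (hΛleΛt hx)) z (hΛleΛt hz)
    · -- Λd ≤ Λ
      intro x hx
      rw [hΛdmem] at hx
      obtain ⟨hx1, hx2⟩ := hx
      have hxtd : x ∈ Λtd := by
        rw [hΛtdmem]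
        intro z hz
        obtain ⟨hcz, hz'⟩ := hkey z hz
        have hexp : B x z = B x (z - c z • u) + c z * B x u := by
          rw [map_sub, map_smul, smul_eq_mul]
          ring
        have hBxu : B x u = 0 := by
          rw [hu_def, map_smul, smul_eq_mul, hx1, mul_zero]
        rw [hexp, hBxu, mul_zero, add_zero]
        exact hx2 _ hz'
      rw [hΛmem]
      exact ⟨hdt hxtd, (hsymm y x).trans hx1⟩
    · -- sup = Λt
      apply le_antisymm
      · refine sup_le hΛleΛt ?_
        rw [Submodule.span_le, Set.singleton_subset_iff]
        exact huΛt
      · intro z hz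
        obtain ⟨hcz, hz'⟩ := hkey z hz
        have hxe : z = (z - c z • u) + c z • u := by abel
        rw [hxe]
        refine Submodule.add_mem _ (Submodule.mem_sup_left hz') ?_
        exact Submodule.mem_sup_right
          (aux_smul_mem _ hcz (Submodule.mem_span_singleton_self u))
end
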